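/- For all k, l ∈ ℕ and r ≥ 1, and all a ∈ W_k and b ∈ V¹_{l,r}, one has φ(a⋆ b) = 0; likewise for all a ∈ W_k and b ∈ V²_{l,r}, one has φ(a⋆ b) = 0. -/
import Mathlib


open scoped ComplexOrder

noncomputable section

/-- The product `S_{μ₁} ⋯ S_{μ_p}` along a word `μ` (with `S_μ = 1` for the empty word). -/
def wordProd {A : Type*} [Monoid A] {n : ℕ} (S : Fin n → A) (μ : List (Fin n)) : A :=
  (μ.map S).prod

/-- `B_{r,s} = Span { S_μ S_ν⋆ : |μ| = r, |ν| = s }`;  `F_k = B_{k,k}`. -/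
def Bspan {A : Type*} [Ring A] [Algebra ℂ A] [StarRing A] {n : ℕ}
    (S : Fin n → A) (r s : ℕ) : Submodule ℂ A :=
  Submodule.span ℂ
    {a | ∃ μ ν : List (Fin n), μ.length = r ∧ ν.length = s ∧
        a = wordProd S μ * star (wordProd S ν)}

/-- `W_0 = ℂ·1` and, for `k ≥ 1`,
`W_k = {x ∈ F_k : φ(y⋆ x) = 0 for all y ∈ F_{k-1}}`. -/
def Wsub {A : Type*} [NormedRing A] [NormedAlgebra ℂ A] [StarRing A] {n : ℕ}
    (φ : A →L[ℂ] ℂ) (S : Fin n → A) : ℕ → Submodule ℂ A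
  | 0 => Submodule.span ℂ {(1 : A)}
  | (k + 1) =>
      Bspan S (k + 1) (k + 1) ⊓
        ⨅ y ∈ Bspan S k k,
          LinearMap.ker ((φ : A →ₗ[ℂ] ℂ) ∘ₗ LinearMap.mulLeft ℂ (star y))

/-- `V¹_{k,r} = Span { S_μ x : |μ| = r, x ∈ W_k }`. -/
def V1 {A : Type*} [NormedRing A] [NormedAlgebra ℂ A] [StarRing A] {n : ℕ}
    (φ : A →L[ℂ] ℂ) (S : Fin n → A) (k r : ℕ) : Submodule ℂ A :=
  Submodule.span ℂ
    {a | ∃ μ : List (Fin n), ∃ x : A, μ.length = r ∧ x ∈ Wsub φ S k ∧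
        a = wordProd S μ * x}

/-- `V²_{k,r} = Span { x S_γ⋆ : |γ| = r, x ∈ W_k }`. -/
def V2 {A : Type*} [NormedRing A] [NormedAlgebra ℂ A] [StarRing A] {n : ℕ}
    (φ : A →L[ℂ] ℂ) (S : Fin n → A) (k r : ℕ) : Submodule ℂ A :=
  Submodule.span ℂ
    {a | ∃ γ : List (Fin n), ∃ x : A, γ.length = r ∧ x ∈ Wsub φ S k ∧
        a = x * star (wordProd S γ)}

set_option linter.unusedSectionVars false

section Aux
variable {A : Type*} [NormedRing A] [StarRing A] [CStarRing A]
    [NormedAlgebra ℂ A] [StarModule ℂ A] [CompleteSpace A]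
    {n : ℕ} {S : Fin n → A}

lemma wordProd_nil : wordProd S ([] : List (Fin n)) = 1 := rfl

lemma wordProd_cons (i : Fin n) (μ : List (Fin n)) :
    wordProd S (i :: μ) = S i * wordProd S μ := by simp [wordProd]

lemma wordProd_append (μ ν : List (Fin n)) :
    wordProd S (μ ++ ν) = wordProd S μ * wordProd S ν := by simp [wordProd]

lemma Sorth (hS1 : ∀ i, star (S i) * S i = 1) (hS2 : ∑ j, S j * star (S j) = 1)
    {i j : Fin n} (hij : i ≠ j) : star (S i) * S j = 0 := by
  letI : CStarAlgebra A := ⟨⟩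
  letI := CStarAlgebra.spectralOrder A
  haveI := CStarAlgebra.spectralOrderedRing A
  set T : Fin n → A := fun m => star (star (S m) * S j) * (star (S m) * S j) with hT
  have hsum : ∑ m, T m = 1 := by
    have h1 : ∑ m, T m = star (S j) * (∑ m, S m * star (S m)) * S j := by
      rw [Finset.mul_sum, Finset.sum_mul]
      exact Finset.sum_congr rfl fun m _ => by simp [hT, star_mul, star_star, mul_assoc]
    rw [h1, hS2, mul_one, hS1]
  have hTj : T j = 1 := by
    have : T j = star (star (S j) * S j) * (star (S j) * S j) := rfl
    rw [this, hS1 j]; simp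
  have herase : ∑ m ∈ Finset.univ.erase j, T m = 0 := by
    have h2 := Finset.add_sum_erase Finset.univ T (Finset.mem_univ j)
    rw [hsum, hTj] at h2
    exact add_left_cancel (a := (1 : A)) (h2.trans (add_zero 1).symm)
  have hTi : T i = 0 :=
    (Finset.sum_eq_zero_iff_of_nonneg fun m _ => star_mul_self_nonneg _).mp herase i
      (Finset.mem_erase.mpr ⟨hij, Finset.mem_univ i⟩)
  exact (CStarRing.star_mul_self_eq_zero_iff _).mp hTi

lemma collapse (hS1 : ∀ i, star (S i) * S i = 1) (hS2 : ∑ j, S j * star (S j) = 1) :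
    ∀ (ν α : List (Fin n)),
    star (wordProd S ν) * wordProd S α = 0 ∨
    (∃ ρ, α = ν ++ ρ ∧ star (wordProd S ν) * wordProd S α = wordProd S ρ) ∨
    (∃ ρ, ν = α ++ ρ ∧ star (wordProd S ν) * wordProd S α = star (wordProd S ρ))
  | [], α => Or.inr (Or.inl ⟨α, rfl, by simp [wordProd_nil]⟩)
  | i :: ν, [] => Or.inr (Or.inr ⟨i :: ν, rfl, by simp [wordProd_nil]⟩)
  | i :: ν, j :: α => by
      rcases eq_or_ne i j with rfl | hij
      · have h : star (wordProd S (i :: ν)) * wordProd S (i :: α)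
            = star (wordProd S ν) * wordProd S α := by
          rw [wordProd_cons, wordProd_cons, star_mul, mul_assoc,
            ← mul_assoc (star (S i)), hS1, one_mul]
        rcases collapse hS1 hS2 ν α with h0 | ⟨ρ, hρ, he⟩ | ⟨ρ, hρ, he⟩
        · exact Or.inl (by rw [h, h0])
        · exact Or.inr (Or.inl ⟨ρ, by rw [hρ, List.cons_append], by rw [h, he]⟩)
        · exact Or.inr (Or.inr ⟨ρ, by rw [hρ, List.cons_append], by rw [h, he]⟩)
      · refine Or.inl ?_
        rw [wordProd_cons, wordProd_cons, star_mul, mul_assoc,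
          ← mul_assoc (star (S i)), Sorth hS1 hS2 hij, zero_mul, mul_zero]

lemma keyK (hS1 : ∀ i, star (S i) * S i = 1) (hS2 : ∑ j, S j * star (S j) = 1)
    (φ : A →L[ℂ] ℂ)
    (hφ : ∀ μ ν : List (Fin n),
      φ (wordProd S μ * star (wordProd S ν)) =
        if μ = ν then ((n : ℂ) ^ μ.length)⁻¹ else 0)
    (μ ν α β : List (Fin n))
    (h : μ.length + α.length ≠ ν.length + β.length) :
    φ (wordProd S μ * star (wordProd S ν) * (wordProd S α * star (wordProd S β))) = 0 := by
  have hre : wordProd S μ * star (wordProd S ν) * (wordProd S α * star (wordProd S β))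
      = wordProd S μ * ((star (wordProd S ν) * wordProd S α) * star (wordProd S β)) := by
    simp [mul_assoc]
  rcases collapse hS1 hS2 ν α with h0 | ⟨ρ, hρ, he⟩ | ⟨ρ, hρ, he⟩
  · rw [hre, h0, zero_mul, mul_zero, map_zero]
  · have hlen : ¬ (μ ++ ρ = β) := by
      intro hc
      apply h
      subst hρ; subst hc
      simp [List.length_append]
      omega
    rw [hre, he, ← mul_assoc, ← wordProd_append, hφ, if_neg hlen]
  · have hlen : ¬ (μ = β ++ ρ) := by
      intro hc
      apply h
      subst hρ; subst hc
      simp [List.length_append]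
      omega
    rw [hre, he, ← star_mul, ← wordProd_append, hφ, if_neg hlen]

lemma star_Bspan {p q : ℕ} {a : A} (ha : a ∈ Bspan S p q) : star a ∈ Bspan S q p := by
  induction ha using Submodule.span_induction with
  | mem x hx =>
      obtain ⟨μ, ν, hμ, hν, rfl⟩ := hx
      exact Submodule.subset_span ⟨ν, μ, hν, hμ, by simp [star_mul, star_star]⟩
  | zero => simp
  | add x y _ _ hx hy => rw [star_add]; exact add_mem hx hy
  | smul c x _ hx => rw [star_smul]; exact Submodule.smul_mem _ _ hx

lemma Wsub_le_Bspan (φ : A →L[ℂ] ℂ) : ∀ k, Wsub φ S k ≤ Bspan S k k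
  | 0 => by
      rw [Wsub]
      apply Submodule.span_le.mpr
      rintro x hx
      rw [Set.mem_singleton_iff] at hx
      subst hx
      exact Submodule.subset_span ⟨[], [], rfl, rfl, by simp [wordProd_nil]⟩
  | (k + 1) => inf_le_left

end Aux

/-- For all `k, l ∈ ℕ` and `r ≥ 1`, `W_k` is φ-orthogonal to both
`V¹_{l,r}` and `V²_{l,r}`. -/
theorem Wsub_orthogonal_V
    {A : Type*} [NormedRing A] [StarRing A] [CStarRing A]
    [NormedAlgebra ℂ A] [StarModule ℂ A] [CompleteSpace A]
    {n : ℕ} (hn : 2 ≤ n) (S : Fin n → A)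
    (hS1 : ∀ i, star (S i) * S i = 1)
    (hS2 : ∑ j, S j * star (S j) = 1)
    (φ : A →L[ℂ] ℂ)
    (hφ : ∀ μ ν : List (Fin n),
      φ (wordProd S μ * star (wordProd S ν)) =
        if μ = ν then ((n : ℂ) ^ μ.length)⁻¹ else 0)
    (k l : ℕ) (r : ℕ) (hr : 1 ≤ r) :
    (∀ a ∈ Wsub φ S k, ∀ b ∈ V1 φ S l r, φ (star a * b) = 0) ∧
    (∀ a ∈ Wsub φ S k, ∀ b ∈ V2 φ S l r, φ (star a * b) = 0) := by
  -- generator-level claims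
  have claim1 : ∀ μ ν : List (Fin n), μ.length = k → ν.length = k →
      ∀ b ∈ V1 φ S l r, φ (wordProd S μ * star (wordProd S ν) * b) = 0 := by
    intro μ ν hμ hν b hb
    have : V1 φ S l r ≤ LinearMap.ker
        ((φ : A →ₗ[ℂ] ℂ) ∘ₗ LinearMap.mulLeft ℂ (wordProd S μ * star (wordProd S ν))) := by
      apply Submodule.span_le.mpr
      rintro _ ⟨τ, x, hτ, hx, rfl⟩
      have hx' : x ∈ Bspan S l l := Wsub_le_Bspan φ l hx
      have : Bspan S l l ≤ LinearMap.ker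
          (((φ : A →ₗ[ℂ] ℂ) ∘ₗ LinearMap.mulLeft ℂ (wordProd S μ * star (wordProd S ν))) ∘ₗ
            LinearMap.mulLeft ℂ (wordProd S τ)) := by
        apply Submodule.span_le.mpr
        rintro _ ⟨α, β, hα, hβ, rfl⟩
        simp only [SetLike.mem_coe, LinearMap.mem_ker, LinearMap.coe_comp,
          Function.comp_apply, LinearMap.mulLeft_apply, ContinuousLinearMap.coe_coe]
        have hrw : wordProd S τ * (wordProd S α * star (wordProd S β))
            = wordProd S (τ ++ α) * star (wordProd S β) := by
          rw [← mul_assoc, ← wordProd_append]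
        rw [hrw]
        apply keyK hS1 hS2 φ hφ
        simp [List.length_append, hμ, hν, hα, hβ, hτ]
        omega
      have := this hx'
      simpa using this
    simpa [mul_assoc] using this hb
  have claim2 : ∀ μ ν : List (Fin n), μ.length = k → ν.length = k →
      ∀ b ∈ V2 φ S l r, φ (wordProd S μ * star (wordProd S ν) * b) = 0 := by
    intro μ ν hμ hν b hb
    have : V2 φ S l r ≤ LinearMap.ker
        ((φ : A →ₗ[ℂ] ℂ) ∘ₗ LinearMap.mulLeft ℂ (wordProd S μ * star (wordProd S ν))) := by
      apply Submodule.span_le.mpr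
      rintro _ ⟨γ, x, hγ, hx, rfl⟩
      have hx' : x ∈ Bspan S l l := Wsub_le_Bspan φ l hx
      have : Bspan S l l ≤ LinearMap.ker
          (((φ : A →ₗ[ℂ] ℂ) ∘ₗ LinearMap.mulLeft ℂ (wordProd S μ * star (wordProd S ν))) ∘ₗ
            LinearMap.mulRight ℂ (star (wordProd S γ))) := by
        apply Submodule.span_le.mpr
        rintro _ ⟨α, β, hα, hβ, rfl⟩
        simp only [SetLike.mem_coe, LinearMap.mem_ker, LinearMap.coe_comp,
          Function.comp_apply, LinearMap.mulRight_apply, ContinuousLinearMap.coe_coe]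
        have hrw : wordProd S α * star (wordProd S β) * star (wordProd S γ)
            = wordProd S α * star (wordProd S (γ ++ β)) := by
          rw [mul_assoc, ← star_mul, ← wordProd_append]
        rw [hrw]
        apply keyK hS1 hS2 φ hφ
        simp [List.length_append, hμ, hν, hα, hβ, hγ]
        omega
      have := this hx'
      simpa using this
    simpa [mul_assoc] using this hb
  constructor
  · intro a ha b hb
    have hsa : star a ∈ Bspan S k k := star_Bspan (Wsub_le_Bspan φ k ha)
    have : Bspan S k k ≤ LinearMap.ker
        ((φ : A →ₗ[ℂ] ℂ) ∘ₗ LinearMap.mulRight ℂ b) := by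
      apply Submodule.span_le.mpr
      rintro _ ⟨μ, ν, hμ, hν, rfl⟩
      simp only [SetLike.mem_coe, LinearMap.mem_ker, LinearMap.coe_comp,
        Function.comp_apply, LinearMap.mulRight_apply, ContinuousLinearMap.coe_coe]
      exact claim1 μ ν hμ hν b hb
    simpa using this hsa
  · intro a ha b hb
    have hsa : star a ∈ Bspan S k k := star_Bspan (Wsub_le_Bspan φ k ha)
    have : Bspan S k k ≤ LinearMap.ker
        ((φ : A →ₗ[ℂ] ℂ) ∘ₗ LinearMap.mulRight ℂ b) := by
      apply Submodule.span_le.mpr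
      rintro _ ⟨μ, ν, hμ, hν, rfl⟩
      simp only [SetLike.mem_coe, LinearMap.mem_ker, LinearMap.coe_comp,
        Function.comp_apply, LinearMap.mulRight_apply, ContinuousLinearMap.coe_coe]
      exact claim2 μ ν hμ hν b hb
    simpa using this hsa
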